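/- arXiv:2208.01767 — 4 statements merged into one kernel-verified Lean document; each statement's English description precedes it below -/
import Mathlib

section
/- Let a > 1 be irrational and L ≥ a. Let (m₋, n₋) be relatively prime positive integers maximizing n₋/m₋ subject to n₋/m₋ < a and a·m₋ ≤ L, and let (m₊, n₊) be relatively prime positive integers minimizing n₊/m₊ subject to n₊/m₊ > a and n₊ ≤ L. Then m₋·n₊ − m₊·n₋ = 1. -/
theorem stmt_3 (a L : ℝ) (ha : 1 < a) (hirr : Irrational a) (hL : a ≤ L)
    (mm nm mp np : ℕ)
    (hmm : 0 < mm) (hnm : 0 < nm) (hmp : 0 < mp) (hnp : 0 < np)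
    (hcopm : Nat.Coprime mm nm) (hcopp : Nat.Coprime mp np)
    (hm1 : (nm : ℝ) / mm < a) (hm2 : a * mm ≤ L)
    (hmmax : ∀ m n : ℕ, 0 < m → 0 < n → Nat.Coprime m n →
      (n : ℝ) / m < a → a * m ≤ L → (n : ℝ) / m ≤ (nm : ℝ) / mm)
    (hp1 : a < (np : ℝ) / mp) (hp2 : (np : ℝ) ≤ L)
    (hpmin : ∀ m n : ℕ, 0 < m → 0 < n → Nat.Coprime m n →
      a < (n : ℝ) / m → (n : ℝ) ≤ L → (np : ℝ) / mp ≤ (n : ℝ) / m) :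
    mm * np = mp * nm + 1 := by
  have ha0 : (0:ℝ) < a := by linarith
  -- non-coprime versions of the maximality/minimality hypotheses
  have hmmax' : ∀ m n : ℕ, 0 < m → 0 < n → (n : ℝ) / m < a → a * m ≤ L →
      (n : ℝ) / m ≤ (nm : ℝ) / mm := by
    intro m n hm hn h1 h2
    set g := Nat.gcd m n with hg
    have hgpos : 0 < g := Nat.gcd_pos_of_pos_left _ hm
    have hm1' : 0 < m / g := Nat.div_pos (Nat.le_of_dvd hm (Nat.gcd_dvd_left m n)) hgpos
    have hn1' : 0 < n / g := Nat.div_pos (Nat.le_of_dvd hn (Nat.gcd_dvd_right m n)) hgpos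
    have hcop : Nat.Coprime (m / g) (n / g) := Nat.coprime_div_gcd_div_gcd hgpos
    have hmeq : (m : ℝ) = g * ((m / g : ℕ) : ℝ) := by
      rw [← Nat.cast_mul, Nat.mul_div_cancel' (Nat.gcd_dvd_left m n)]
    have hneq : (n : ℝ) = g * ((n / g : ℕ) : ℝ) := by
      rw [← Nat.cast_mul, Nat.mul_div_cancel' (Nat.gcd_dvd_right m n)]
    have hgne : (g : ℝ) ≠ 0 := Nat.cast_ne_zero.mpr hgpos.ne'
    have hratio : ((n / g : ℕ) : ℝ) / ((m / g : ℕ) : ℝ) = (n : ℝ) / m := by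
      rw [hmeq, hneq, mul_div_mul_left _ _ hgne]
    have hle : ((m / g : ℕ) : ℝ) ≤ (m : ℝ) := Nat.cast_le.mpr (Nat.div_le_self _ _)
    have h2' : a * ((m / g : ℕ) : ℝ) ≤ L := le_trans (by nlinarith) h2
    have := hmmax (m / g) (n / g) hm1' hn1' hcop (by rw [hratio]; exact h1) h2'
    rwa [hratio] at this
  have hpmin' : ∀ m n : ℕ, 0 < m → 0 < n → a < (n : ℝ) / m → (n : ℝ) ≤ L →
      (np : ℝ) / mp ≤ (n : ℝ) / m := by
    intro m n hm hn h1 h2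
    set g := Nat.gcd m n with hg
    have hgpos : 0 < g := Nat.gcd_pos_of_pos_left _ hm
    have hm1' : 0 < m / g := Nat.div_pos (Nat.le_of_dvd hm (Nat.gcd_dvd_left m n)) hgpos
    have hn1' : 0 < n / g := Nat.div_pos (Nat.le_of_dvd hn (Nat.gcd_dvd_right m n)) hgpos
    have hcop : Nat.Coprime (m / g) (n / g) := Nat.coprime_div_gcd_div_gcd hgpos
    have hmeq : (m : ℝ) = g * ((m / g : ℕ) : ℝ) := by
      rw [← Nat.cast_mul, Nat.mul_div_cancel' (Nat.gcd_dvd_left m n)]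
    have hneq : (n : ℝ) = g * ((n / g : ℕ) : ℝ) := by
      rw [← Nat.cast_mul, Nat.mul_div_cancel' (Nat.gcd_dvd_right m n)]
    have hgne : (g : ℝ) ≠ 0 := Nat.cast_ne_zero.mpr hgpos.ne'
    have hratio : ((n / g : ℕ) : ℝ) / ((m / g : ℕ) : ℝ) = (n : ℝ) / m := by
      rw [hmeq, hneq, mul_div_mul_left _ _ hgne]
    have hle : ((n / g : ℕ) : ℝ) ≤ (n : ℝ) := Nat.cast_le.mpr (Nat.div_le_self _ _)
    have h2' : ((n / g : ℕ) : ℝ) ≤ L := le_trans hle h2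
    have := hpmin (m / g) (n / g) hm1' hn1' hcop (by rw [hratio]; exact h1) h2'
    rwa [hratio] at this
  -- key contradiction lemma: no admissible lattice point lies strictly between the rays
  have hmmR : (0:ℝ) < (mm:ℝ) := by exact_mod_cast hmm
  have hmpR : (0:ℝ) < (mp:ℝ) := by exact_mod_cast hmp
  have key : ∀ m n : ℤ, 0 < m → 0 < n →
      1 ≤ n * (mm:ℤ) - m * (nm:ℤ) → 1 ≤ m * (np:ℤ) - n * (mp:ℤ) →
      (((n:ℝ) < a * (m:ℝ) → a * (m:ℝ) ≤ L → False) ∧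
       (a * (m:ℝ) < (n:ℝ) → (n:ℝ) ≤ L → False)) := by
    intro m n hm hn hv hu
    have hMpos : 0 < m.toNat := by omega
    have hNpos : 0 < n.toNat := by omega
    have hMc : ((m.toNat : ℕ) : ℝ) = (m : ℝ) := by exact_mod_cast Int.toNat_of_nonneg hm.le
    have hNc : ((n.toNat : ℕ) : ℝ) = (n : ℝ) := by exact_mod_cast Int.toNat_of_nonneg hn.le
    have hmR : (0:ℝ) < (m:ℝ) := by exact_mod_cast hm
    have hnR : (0:ℝ) < (n:ℝ) := by exact_mod_cast hn
    have hvR : (m:ℝ) * nm + 1 ≤ (n:ℝ) * mm := by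
      have : (1:ℝ) ≤ (n:ℝ) * (mm:ℝ) - (m:ℝ) * (nm:ℝ) := by exact_mod_cast hv
      linarith
    have huR : (n:ℝ) * mp + 1 ≤ (m:ℝ) * np := by
      have : (1:ℝ) ≤ (m:ℝ) * (np:ℝ) - (n:ℝ) * (mp:ℝ) := by exact_mod_cast hu
      linarith
    constructor
    · intro hlt hle
      have h1 : ((n.toNat : ℕ) : ℝ) / ((m.toNat : ℕ) : ℝ) < a := by
        rw [hMc, hNc, div_lt_iff₀ hmR]; linarith
      have h2 : a * ((m.toNat : ℕ) : ℝ) ≤ L := by rw [hMc]; exact hle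
      have h3 := hmmax' m.toNat n.toNat hMpos hNpos h1 h2
      rw [hMc, hNc, div_le_div_iff₀ hmR hmmR] at h3
      nlinarith
    · intro hlt hle
      have h1 : a < ((n.toNat : ℕ) : ℝ) / ((m.toNat : ℕ) : ℝ) := by
        rw [hMc, hNc, lt_div_iff₀ hmR]; linarith
      have h2 : ((n.toNat : ℕ) : ℝ) ≤ L := by rw [hNc]; exact hle
      have h3 := hpmin' m.toNat n.toNat hMpos hNpos h1 h2
      rw [hMc, hNc, div_le_div_iff₀ hmpR hmR] at h3
      nlinarith
  -- the determinant is at least 1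
  set d : ℤ := (mm:ℤ) * np - (mp:ℤ) * nm with hd_set
  have hd1 : 1 ≤ d := by
    have h1 : (nm : ℝ) / mm < (np : ℝ) / mp := lt_trans hm1 hp1
    rw [div_lt_div_iff₀ hmmR hmpR] at h1
    have h1r : (nm:ℝ) * mp < (mm:ℝ) * np := by linarith
    have h2 : nm * mp < mm * np := by exact_mod_cast h1r
    have h3 : (nm : ℤ) * mp < (mm:ℤ) * np := by exact_mod_cast h2
    have h4 : (mp:ℤ) * nm < (mm:ℤ) * np := by rw [mul_comm (mp:ℤ) (nm:ℤ)]; exact h3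
    rw [hd_set]; omega
  by_contra hne
  have hdne : d ≠ 1 := by
    intro h1
    apply hne
    have : (mm : ℤ) * np = mp * nm + 1 := by rw [hd_set] at h1; omega
    exact_mod_cast this
  have hd2 : 2 ≤ d := by omega
  clear_value d
  -- now derive a contradiction
  have hMMpos : (0:ℤ) < (mm:ℤ) := by exact_mod_cast hmm
  have hNMpos : (0:ℤ) < (nm:ℤ) := by exact_mod_cast hnm
  have hMPpos : (0:ℤ) < (mp:ℤ) := by exact_mod_cast hmp
  have hNPpos : (0:ℤ) < (np:ℤ) := by exact_mod_cast hnp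
  have hm1' : (nm:ℝ) < a * mm := by rwa [div_lt_iff₀ hmmR] at hm1
  have hp1' : a * mp < (np:ℝ) := by rwa [lt_div_iff₀ hmpR] at hp1
  -- ratios of integers are rational, never equal to the irrational a
  have hne_ratio : ∀ m n : ℤ, 0 < m → (n:ℝ) ≠ a * (m:ℝ) := by
    intro m n hm heq
    apply hirr
    refine ⟨(n:ℚ) / (m:ℚ), ?_⟩
    have hmR : ((m:ℝ)) ≠ 0 := by
      have : (0:ℝ) < (m:ℝ) := by exact_mod_cast hm
      linarith
    push_cast
    rw [div_eq_iff hmR]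
    linarith [heq]
  -- Bezout
  have hBez : IsCoprime ((mm:ℤ)) ((nm:ℤ)) := Nat.isCoprime_iff_coprime.mpr hcopm
  obtain ⟨q, p0, hb⟩ := hBez
  set x : ℤ := -p0 with hx_set
  set y : ℤ := q with hy_set
  have hb' : y * mm - x * nm = 1 := by rw [hx_set, hy_set]; linarith only [hb]
  set s0 : ℤ := x * np - y * mp with hs0_set
  clear_value x y s0
  -- d does not divide s0
  have hnd : ¬ (d ∣ s0) := by
    rintro ⟨k, hk⟩
    have hu0 : (x - k * mm) * np - (y - k * nm) * mp = 0 := by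
      rw [hs0_set, hd_set] at hk; linear_combination hk
    have hv0 : (y - k * nm) * mm - (x - k * mm) * nm = 1 := by
      linear_combination hb'
    have hdm0 : d * (x - k * mm) = (mp:ℤ) := by
      rw [hd_set]; linear_combination (mm:ℤ) * hu0 + (mp:ℤ) * hv0
    have hdn0 : d * (y - k * nm) = (np:ℤ) := by
      rw [hd_set]; linear_combination (nm:ℤ) * hu0 + (np:ℤ) * hv0
    have hcoppZ : IsCoprime ((mp:ℤ)) ((np:ℤ)) := Nat.isCoprime_iff_coprime.mpr hcopp
    have hunit : IsUnit d := hcoppZ.isUnit_of_dvd' ⟨_, hdm0.symm⟩ ⟨_, hdn0.symm⟩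
    rcases Int.isUnit_iff.mp hunit with h | h <;> omega
  set k : ℤ := s0 / d with hk_set
  set u : ℤ := s0 % d with hu_set
  clear_value k u
  have hdpos : (0:ℤ) < d := by omega
  have hu_pos : 0 < u := by
    have h1 : 0 ≤ u := by rw [hu_set]; exact Int.emod_nonneg s0 (by omega)
    have h2 : u ≠ 0 := by
      rw [hu_set]; intro h; exact hnd (Int.dvd_of_emod_eq_zero h)
    omega
  have hu_lt : u < d := by rw [hu_set]; exact Int.emod_lt_of_pos s0 hdpos
  have hu_eq : u = s0 - d * k := by rw [hu_set, hk_set]; exact Int.emod_def s0 d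
  set m : ℤ := x - k * mm with hm_set
  set n : ℤ := y - k * nm with hn_set
  clear_value m n
  have hu' : m * np - n * mp = u := by
    rw [hm_set, hn_set, hu_eq, hs0_set, hd_set]; ring
  have hv' : n * mm - m * nm = 1 := by
    rw [hm_set, hn_set]; linear_combination hb'
  have hdm : d * m = u * mm + mp := by
    rw [hd_set]; linear_combination (mm:ℤ) * hu' + (mp:ℤ) * hv'
  have hdn : d * n = u * nm + np := by
    rw [hd_set]; linear_combination (nm:ℤ) * hu' + (np:ℤ) * hv'
  have posd : ∀ z : ℤ, 0 < d * z → 0 < z := by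
    intro z h
    rcases mul_pos_iff.mp h with ⟨_, h2⟩ | ⟨h1, _⟩
    · exact h2
    · omega
  have hm_pos : 0 < m := by
    apply posd; rw [hdm]; linarith only [mul_pos hu_pos hMMpos, hMPpos]
  have hn_pos : 0 < n := by
    apply posd; rw [hdn]; linarith only [mul_pos hu_pos hNMpos, hNPpos]
  -- reflected point
  set m' : ℤ := mm + mp - m with hm'_set
  set n' : ℤ := nm + np - n with hn'_set
  clear_value m' n'
  have hu'' : m' * np - n' * mp = d - u := by
    rw [hm'_set, hn'_set]; linear_combination -hu' - hd_set
  have hv'' : n' * mm - m' * nm = d - 1 := by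
    rw [hm'_set, hn'_set]; linear_combination -hv' - hd_set
  have hdm' : d * m' = (d - u) * mm + (d - 1) * mp := by
    linear_combination (mm:ℤ) * hu'' + (mp:ℤ) * hv'' + m' * hd_set
  have hdn' : d * n' = (d - u) * nm + (d - 1) * np := by
    linear_combination (nm:ℤ) * hu'' + (np:ℤ) * hv'' + n' * hd_set
  have hm'_pos : 0 < m' := by
    apply posd; rw [hdm']; linarith only [mul_pos (show (0:ℤ) < d - u by linarith only [hu_lt]) hMMpos,
      mul_pos (show (0:ℤ) < d - 1 by linarith only [hd2]) hMPpos]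
  have hn'_pos : 0 < n' := by
    apply posd; rw [hdn']; linarith only [mul_pos (show (0:ℤ) < d - u by linarith only [hu_lt]) hNMpos,
      mul_pos (show (0:ℤ) < d - 1 by linarith only [hd2]) hNPpos]
  have hmR : (0:ℝ) < (m:ℝ) := by exact_mod_cast hm_pos
  have hm'R : (0:ℝ) < (m':ℝ) := by exact_mod_cast hm'_pos
  have hvge : 1 ≤ n * (mm:ℤ) - m * (nm:ℤ) := le_of_eq hv'.symm
  have huge : 1 ≤ m * (np:ℤ) - n * (mp:ℤ) := by linarith only [hu', hu_pos]
  have hvge' : 1 ≤ n' * (mm:ℤ) - m' * (nm:ℤ) := by linarith only [hv'', hd2]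
  have huge' : 1 ≤ m' * (np:ℤ) - n' * (mp:ℤ) := by linarith only [hu'', hu_lt]
  -- case analysis
  rcases lt_trichotomy ((n:ℝ)) (a * (m:ℝ)) with h | h | h
  · by_cases hla : a * (m:ℝ) ≤ L
    · exact (key m n hm_pos hn_pos hvge huge).1 h hla
    · push_neg at hla
      have h1 : (mm:ℝ) < (m:ℝ) := (mul_lt_mul_iff_right₀ ha0).mp (by linarith only [hm2, hla])
      have h2 : (mp:ℝ) < (m:ℝ) := (mul_lt_mul_iff_right₀ ha0).mp (by linarith only [hp1', hp2, hla])
      have h1' : (mm:ℤ) < m := by exact_mod_cast h1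
      have h2' : (mp:ℤ) < m := by exact_mod_cast h2
      have hm'mm : m' < (mm:ℤ) := by omega
      have hm'mp : m' < (mp:ℤ) := by omega
      rcases lt_trichotomy ((n':ℝ)) (a * (m':ℝ)) with h3 | h3 | h3
      · refine (key m' n' hm'_pos hn'_pos hvge' huge').1 h3 ?_
        have hx1 : (m':ℝ) < (mm:ℝ) := by exact_mod_cast hm'mm
        have := (mul_lt_mul_iff_right₀ ha0).mpr hx1
        linarith only [this, hm2]
      · exact hne_ratio m' n' hm'_pos h3
      · refine (key m' n' hm'_pos hn'_pos hvge' huge').2 h3 ?_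
        have t1 : m' * np ≤ ((mp:ℤ) - 1) * np := mul_le_mul_of_nonneg_right (by omega) hNPpos.le
        have t2 : n' * (mp:ℤ) < np * mp := by linarith only [t1, huge', hNPpos]
        have hlt : n' < (np:ℤ) := lt_of_mul_lt_mul_right t2 hMPpos.le
        have : (n':ℝ) < (np:ℝ) := by exact_mod_cast hlt
        linarith only [this, hp2]
  · exact hne_ratio m n hm_pos h
  · by_cases hla : (n:ℝ) ≤ L
    · exact (key m n hm_pos hn_pos hvge huge).2 h hla
    · push_neg at hla
      have h1 : (np:ℝ) < (n:ℝ) := by linarith only [hla, hp2]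
      have h2 : (nm:ℝ) < (n:ℝ) := by linarith only [hla, hm1', hm2]
      have h1' : (np:ℤ) < n := by exact_mod_cast h1
      have h2' : (nm:ℤ) < n := by exact_mod_cast h2
      have hn'nm : n' < (nm:ℤ) := by omega
      have hn'np : n' < (np:ℤ) := by omega
      rcases lt_trichotomy ((n':ℝ)) (a * (m':ℝ)) with h3 | h3 | h3
      · refine (key m' n' hm'_pos hn'_pos hvge' huge').1 h3 ?_
        have t1 : n' * mm ≤ ((nm:ℤ) - 1) * mm := mul_le_mul_of_nonneg_right (by omega) hMMpos.le
        have t2 : m' * (nm:ℤ) < mm * nm := by linarith only [t1, hvge', hMMpos]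
        have hlt : m' < (mm:ℤ) := lt_of_mul_lt_mul_right t2 hNMpos.le
        have hx1 : (m':ℝ) < (mm:ℝ) := by exact_mod_cast hlt
        have := (mul_lt_mul_iff_right₀ ha0).mpr hx1
        linarith only [this, hm2]
      · exact hne_ratio m' n' hm'_pos h3
      · refine (key m' n' hm'_pos hn'_pos hvge' huge').2 h3 ?_
        have : (n':ℝ) < (np:ℝ) := by exact_mod_cast hn'np
        linarith only [this, hp2]
end

section
/- Let 0 < a < 1/2 and 0 < δ < 2. Let m, n be positive integers with n = a·m and n < m. Let c : ℕ → ℝ be a nondecreasing nonnegative sequence such that |c(k)² − 2k| ≤ δ·k for all k ≥ m/2. Then c(m) · (c(m) − c(m−n)) / n ≤ (2 + δ − √((4 − δ²)·(1 − a)))/a. -/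
set_option maxHeartbeats 1000000


theorem stmt_12 (a δ : ℝ) (ha0 : 0 < a) (ha : a < 1 / 2)
    (hδ0 : 0 < δ) (hδ : δ < 2)
    (m n : ℕ) (hm : 0 < m) (hn : 0 < n) (hnm : (n : ℝ) = a * m) (hlt : n < m)
    (c : ℕ → ℝ) (hmono : Monotone c) (hpos : ∀ k, 0 ≤ c k)
    (hasymp : ∀ k : ℕ, (m : ℝ) / 2 ≤ k → |c k ^ 2 - 2 * k| ≤ δ * k) :
    c m * (c m - c (m - n)) / n ≤ (2 + δ - Real.sqrt ((4 - δ ^ 2) * (1 - a))) / a := by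
  have hm0 : (0:ℝ) < m := by exact_mod_cast hm
  have hn0 : (0:ℝ) < n := by exact_mod_cast hn
  have hcast : ((m - n : ℕ) : ℝ) = (m : ℝ) - n := by
    rw [Nat.cast_sub hlt.le]
  have hnhalf : (n : ℝ) < m / 2 := by
    rw [hnm]; nlinarith
  have hhalf : (m : ℝ) / 2 ≤ ((m - n : ℕ) : ℝ) := by
    rw [hcast]; linarith
  have hU2 := hasymp m (by linarith)
  have hL2 := hasymp (m - n) hhalf
  rw [abs_le] at hU2 hL2
  have hUb : c m ^ 2 ≤ (2 + δ) * m := by nlinarith [hU2.2]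
  have hLb : (2 - δ) * ((m:ℝ) - n) ≤ c (m - n) ^ 2 := by
    have := hL2.1; rw [hcast] at this; nlinarith
  set U := Real.sqrt ((2 + δ) * m) with hUdef
  set L := Real.sqrt ((2 - δ) * ((m:ℝ) - n)) with hLdef
  have hUnn : (0:ℝ) ≤ (2 + δ) * m := by positivity
  have hnm' : (n:ℝ) < m := by exact_mod_cast hlt
  have hLnn : (0:ℝ) ≤ (2 - δ) * ((m:ℝ) - n) := by nlinarith
  have hcmU : c m ≤ U := (Real.le_sqrt (hpos m) hUnn).mpr hUb
  have hLcm : L ≤ c (m - n) := by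
    calc L ≤ Real.sqrt (c (m - n) ^ 2) := Real.sqrt_le_sqrt hLb
    _ = c (m - n) := Real.sqrt_sq (hpos _)
  have hmono' : c (m - n) ≤ c m := hmono (Nat.sub_le m n)
  have hUsq : U ^ 2 = (2 + δ) * m := Real.sq_sqrt hUnn
  have hUL : U * L = m * Real.sqrt ((4 - δ ^ 2) * (1 - a)) := by
    rw [hUdef, hLdef, ← Real.sqrt_mul hUnn]
    have heq : (2 + δ) * (m:ℝ) * ((2 - δ) * ((m:ℝ) - n)) =
        ((4 - δ ^ 2) * (1 - a)) * (m:ℝ) ^ 2 := by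
      have : (m:ℝ) - n = (1 - a) * m := by rw [hnm]; ring
      rw [this]; ring
    rw [heq, Real.sqrt_mul (by nlinarith), Real.sqrt_sq hm0.le]
    ring
  have hL0 : 0 ≤ L := Real.sqrt_nonneg _
  have key : c m * (c m - c (m - n)) ≤ U * U - U * L := by
    have h1 : c m * (c m - c (m - n)) ≤ c m * (c m - L) :=
      mul_le_mul_of_nonneg_left (by linarith) (hpos m)
    have h2 : 0 ≤ (U - c m) * (c m + U - L) :=
      mul_nonneg (by linarith) (by linarith)
    nlinarith [h1, h2]
  have key2 : c m * (c m - c (m - n)) ≤ (2 + δ) * m - m * Real.sqrt ((4 - δ^2) * (1 - a)) := by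
    calc c m * (c m - c (m - n)) ≤ U * U - U * L := key
    _ = U ^ 2 - U * L := by ring
    _ = (2 + δ) * m - m * Real.sqrt ((4 - δ^2) * (1 - a)) := by rw [hUsq, hUL]
  rw [div_le_div_iff₀ hn0 ha0]
  have : ((2 + δ) * m - m * Real.sqrt ((4 - δ^2) * (1 - a))) * a =
      (2 + δ - Real.sqrt ((4 - δ ^ 2) * (1 - a))) * n := by
    rw [hnm]; ring
  nlinarith [key2, this, ha0.le]
end

section
/- Let a > 0, b > 0 and for k ≥ 0 let N_k(a,b) denote the (k+1)-st smallest element, with multiplicity, of the multiset {m·a + n·b : m,n nonnegative integers}. Then the sequence (N_k(a,b)) is subadditive: N_{k+l}(a,b) ≤ N_k(a,b) + N_l(a,b) for all k, l ≥ 0. -/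
/-!
`N_k` is the infimum of the thresholds `t` below which at least `k + 1` lattice points
`(m, n) ∈ ℕ²` have weight `m a + n b ≤ t`. If `A` and `B` are the lattice points of weight at
most `t` and at most `s`, then every point of `A + B` has weight at most `t + s`, and the
Cauchy–Davenport inequality `|A + B| ≥ |A| + |B| - 1` (valid in `ℕ²` because the lexicographic
order makes it a linearly ordered cancellative monoid) turns `k + 1` and `l + 1` points into
`k + l + 1`. Thus admissible thresholds add, and so do their infima.
-/

open Pointwise

theorem Set.natCard_add_natCard_sub_one_le_natCard_add {A B : Set (ℕ × ℕ)} (hA : A.Finite)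
    (hB : B.Finite) (hA₀ : A.Nonempty) (hB₀ : B.Nonempty) :
    Nat.card A + Nat.card B - 1 ≤ Nat.card ↥(A + B) := by
  classical
  lift A to Finset (ℕ × ℕ) using hA
  lift B to Finset (ℕ × ℕ) using hB
  rw [← Finset.coe_add]
  simp only [Nat.card_coe_set_eq, Set.ncard_coe_finset]
  exact cauchy_davenport_add_of_linearOrder_isCancelAdd (α := Lex (ℕ × ℕ)) hA₀ hB₀

theorem csInf_le_csInf_add_csInf {S T U : Set ℝ} (hS : S.Nonempty) (hS' : BddBelow S)
    (hT : T.Nonempty) (hT' : BddBelow T) (hU : BddBelow U) (h : S + T ⊆ U) :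
    sInf U ≤ sInf S + sInf T :=
  (csInf_le_csInf hU (hS.add hT) h).trans_eq (csInf_add hS hS' hT hT')

namespace EllipsoidCapacity

variable {a b : ℝ}

def sublevel (a b t : ℝ) : Set (ℕ × ℕ) := {p | p.1 * a + p.2 * b ≤ t}

def thresholds (a b : ℝ) (k : ℕ) : Set ℝ := {t | k + 1 ≤ Nat.card (sublevel a b t)}

theorem sublevel_finite (ha : 0 < a) (hb : 0 < b) (t : ℝ) : (sublevel a b t).Finite := by
  refine (Set.finite_Iic (⌈t / a⌉₊, ⌈t / b⌉₊)).subset fun p (hp : _ ≤ t) => ⟨?_, ?_⟩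
  · have : (p.1 : ℝ) ≤ t / a := (le_div_iff₀ ha).2 (by nlinarith [p.2.cast_nonneg' (α := ℝ)])
    exact_mod_cast this.trans (Nat.le_ceil _)
  · have : (p.2 : ℝ) ≤ t / b := (le_div_iff₀ hb).2 (by nlinarith [p.1.cast_nonneg' (α := ℝ)])
    exact_mod_cast this.trans (Nat.le_ceil _)

theorem sublevel_add_subset (t s : ℝ) :
    sublevel a b t + sublevel a b s ⊆ sublevel a b (t + s) := by
  rintro _ ⟨p, hp : _ ≤ t, q, hq : _ ≤ s, rfl⟩
  change _ ≤ t + s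
  simp only [Prod.fst_add, Prod.snd_add, Nat.cast_add]
  linarith

theorem sublevel_nonempty_of_mem_thresholds {k : ℕ} {t : ℝ} (ht : t ∈ thresholds a b k) :
    (sublevel a b t).Nonempty :=
  have hcard : k + 1 ≤ Nat.card (sublevel a b t) := ht
  Set.nonempty_coe_sort.1 (Nat.card_ne_zero.1 (by omega)).1

theorem nonneg_of_mem_thresholds (ha : 0 ≤ a) (hb : 0 ≤ b) {k : ℕ} {t : ℝ}
    (ht : t ∈ thresholds a b k) : 0 ≤ t := by
  obtain ⟨p, hp : _ ≤ t⟩ := sublevel_nonempty_of_mem_thresholds ht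
  exact le_trans (by positivity) hp

theorem mul_mem_thresholds (ha : 0 < a) (hb : 0 < b) (k : ℕ) : k * a ∈ thresholds a b k := by
  have := (sublevel_finite ha hb (k * a)).to_subtype
  let f : Fin (k + 1) → sublevel a b (k * a) := fun i =>
    ⟨(i, 0), show (i : ℕ) * a + ((0 : ℕ) : ℝ) * b ≤ k * a by
      rw [Nat.cast_zero, zero_mul, add_zero]; gcongr; omega⟩
  have hf : Function.Injective f := fun i j h =>
    Fin.ext (congrArg (fun p : sublevel a b (k * a) => p.1.1) h)
  exact (Nat.card_fin (k + 1)).symm.trans_le (Nat.card_le_card_of_injective f hf)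

theorem add_mem_thresholds (ha : 0 < a) (hb : 0 < b) {k l : ℕ} {t s : ℝ}
    (ht : t ∈ thresholds a b k) (hs : s ∈ thresholds a b l) : t + s ∈ thresholds a b (k + l) :=
  calc k + l + 1 ≤ Nat.card (sublevel a b t) + Nat.card (sublevel a b s) - 1 := by
        have hkt : k + 1 ≤ Nat.card (sublevel a b t) := ht
        have hls : l + 1 ≤ Nat.card (sublevel a b s) := hs
        omega
    _ ≤ Nat.card ↥(sublevel a b t + sublevel a b s) :=
        Set.natCard_add_natCard_sub_one_le_natCard_add (sublevel_finite ha hb t)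
          (sublevel_finite ha hb s) (sublevel_nonempty_of_mem_thresholds ht)
          (sublevel_nonempty_of_mem_thresholds hs)
    _ ≤ Nat.card (sublevel a b (t + s)) :=
        Nat.card_mono (sublevel_finite ha hb _) (sublevel_add_subset t s)

end EllipsoidCapacity

theorem stmt_16 (a b : ℝ) (ha : 0 < a) (hb : 0 < b) :
    let N : ℕ → ℝ := fun k =>
      sInf {t : ℝ | k + 1 ≤ Nat.card {p : ℕ × ℕ | (p.1 : ℝ) * a + (p.2 : ℝ) * b ≤ t}}
    ∀ k l : ℕ, N (k + l) ≤ N k + N l := by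
  intro _ k l
  have hbdd (m : ℕ) : BddBelow (EllipsoidCapacity.thresholds a b m) :=
    ⟨0, fun _ => EllipsoidCapacity.nonneg_of_mem_thresholds ha.le hb.le⟩
  have hne (m : ℕ) : (EllipsoidCapacity.thresholds a b m).Nonempty :=
    ⟨_, EllipsoidCapacity.mul_mem_thresholds ha hb m⟩
  exact csInf_le_csInf_add_csInf (hne k) (hbdd k) (hne l) (hbdd l) (hbdd (k + l))
    (Set.add_subset_iff.2 fun _ ht _ hs => EllipsoidCapacity.add_mem_thresholds ha hb ht hs)
end

section
/- Let a, b > 0 and let N_k(a,b) be the (k+1)-st smallest element with multiplicity of {m·a + n·b : m,n ∈ ℕ}. Then N_k(a,b)² / k → 2·a·b as k → ∞. -/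
open Finset in
lemma aux_card (a b t : ℝ) (ha : 0 < a) (hb : 0 < b) (ht : 0 ≤ t) :
    t ^ 2 / (2 * a * b) ≤ (Nat.card {p : ℕ × ℕ | (p.1 : ℝ) * a + (p.2 : ℝ) * b ≤ t} : ℝ) ∧
    (Nat.card {p : ℕ × ℕ | (p.1 : ℝ) * a + (p.2 : ℝ) * b ≤ t} : ℝ) ≤ (t + a + b) ^ 2 / (2 * a * b) := by
  set M : ℕ := ⌊t / a⌋₊ with hM
  set Nn : ℕ := ⌊t / b⌋₊ with hNn
  set F : Finset (ℕ × ℕ) :=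
    (Finset.range (M + 1) ×ˢ Finset.range (Nn + 1)).filter
      (fun p => (p.1 : ℝ) * a + (p.2 : ℝ) * b ≤ t) with hF
  have hset : {p : ℕ × ℕ | (p.1 : ℝ) * a + (p.2 : ℝ) * b ≤ t} = ↑F := by
    ext p
    simp only [Set.mem_setOf_eq, hF, Finset.coe_filter, Finset.mem_product, Finset.mem_range,
      Nat.lt_succ_iff]
    constructor
    · intro h
      refine ⟨⟨Nat.le_floor ?_, Nat.le_floor ?_⟩, h⟩
      · rw [le_div_iff₀ ha]
        nlinarith [mul_nonneg (Nat.cast_nonneg (α := ℝ) p.2) hb.le]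
      · rw [le_div_iff₀ hb]
        nlinarith [mul_nonneg (Nat.cast_nonneg (α := ℝ) p.1) ha.le]
    · exact fun h => h.2
  have hcard : (Nat.card {p : ℕ × ℕ | (p.1 : ℝ) * a + (p.2 : ℝ) * b ≤ t}) = F.card := by
    rw [hset, Nat.card_coe_set_eq, Set.ncard_coe_finset]
  have hma : ∀ m ∈ Finset.range (M + 1), (m : ℝ) * a ≤ t := by
    intro m hm
    rw [Finset.mem_range, Nat.lt_succ_iff] at hm
    have h1 : (m : ℝ) ≤ t / a := le_trans (by exact_mod_cast hm) (Nat.floor_le (by positivity))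
    calc (m : ℝ) * a ≤ (t / a) * a := by nlinarith
    _ = t := by field_simp
  have hsum : F.card = ∑ m ∈ Finset.range (M + 1), (⌊(t - (m : ℝ) * a) / b⌋₊ + 1) := by
    rw [hF, Finset.card_filter, Finset.sum_product]
    refine Finset.sum_congr rfl fun m hm => ?_
    rw [← Finset.card_filter]
    have hKN : ⌊(t - (m : ℝ) * a) / b⌋₊ ≤ Nn := by
      refine Nat.floor_mono ?_
      gcongr
      · nlinarith [mul_nonneg (Nat.cast_nonneg (α := ℝ) m) ha.le]
    have : (Finset.range (Nn + 1)).filter (fun n : ℕ => (m : ℝ) * a + (n : ℝ) * b ≤ t)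
        = Finset.range (⌊(t - (m : ℝ) * a) / b⌋₊ + 1) := by
      ext n
      simp only [Finset.mem_filter, Finset.mem_range, Nat.lt_succ_iff]
      constructor
      · rintro ⟨-, h2⟩
        exact Nat.le_floor (by rw [le_div_iff₀ hb]; linarith)
      · intro h
        have h1 : (n : ℝ) ≤ (t - (m : ℝ) * a) / b :=
          le_trans (by exact_mod_cast h) (Nat.floor_le (div_nonneg (by linarith [hma m hm]) hb.le))
        refine ⟨le_trans h hKN, ?_⟩
        rw [le_div_iff₀ hb] at h1
        linarith
    rw [this, Finset.card_range]
  -- floor bounds for M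
  have hM1 : (M : ℝ) * a ≤ t := hma M (by simp)
  have hM2 : t < ((M : ℝ) + 1) * a := by
    have := Nat.lt_floor_add_one (t / a)
    rw [div_lt_iff₀ ha] at this
    exact_mod_cast this
  have hg : (∑ i ∈ Finset.range (M + 1), (i : ℝ)) = (M : ℝ) * (M + 1) / 2 := by
    have h := Finset.sum_range_id_mul_two (M + 1)
    have h' : (∑ i ∈ Finset.range (M + 1), i) * 2 = (M + 1) * M := by simpa using h
    have h2 := congrArg (fun n : ℕ => (n : ℝ)) h'
    push_cast at h2
    linarith
  have hcast : (F.card : ℝ) = ∑ m ∈ Finset.range (M + 1), ((⌊(t - (m : ℝ) * a) / b⌋₊ : ℝ) + 1) := by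
    rw [hsum]; push_cast; ring
  have hfl : ∀ m ∈ Finset.range (M + 1),
      (t - (m : ℝ) * a) / b ≤ (⌊(t - (m : ℝ) * a) / b⌋₊ : ℝ) + 1 ∧
      (⌊(t - (m : ℝ) * a) / b⌋₊ : ℝ) + 1 ≤ (t - (m : ℝ) * a) / b + 1 := by
    intro m hm
    constructor
    · exact (Nat.lt_floor_add_one _).le
    · have h0 : (0:ℝ) ≤ (t - (m : ℝ) * a) / b := div_nonneg (by linarith [hma m hm]) hb.le
      have := Nat.floor_le h0
      linarith
  have hsum_eval : ∑ m ∈ Finset.range (M + 1), ((t - (m : ℝ) * a) / b)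
      = (((M : ℝ) + 1) * t - (M : ℝ) * (M + 1) / 2 * a) / b := by
    rw [← Finset.sum_div]
    congr 1
    rw [Finset.sum_sub_distrib, Finset.sum_const, Finset.card_range, ← Finset.sum_mul, hg]
    push_cast
    ring
  have hlow : (∑ m ∈ Finset.range (M + 1), ((t - (m : ℝ) * a) / b)) ≤ (F.card : ℝ) := by
    rw [hcast]
    exact Finset.sum_le_sum fun m hm => (hfl m hm).1
  have hhigh : (F.card : ℝ) ≤ (∑ m ∈ Finset.range (M + 1), ((t - (m : ℝ) * a) / b)) + (M + 1) := by
    rw [hcast]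
    calc _ ≤ ∑ m ∈ Finset.range (M + 1), ((t - (m : ℝ) * a) / b + 1) :=
          Finset.sum_le_sum fun m hm => (hfl m hm).2
      _ = _ := by rw [Finset.sum_add_distrib, Finset.sum_const, Finset.card_range]; push_cast; ring
  rw [hcard]
  rw [hsum_eval] at hlow hhigh
  constructor
  · refine le_trans ?_ hlow
    rw [div_le_div_iff₀ (by positivity) hb]
    have k1 : (0:ℝ) ≤ 2 * t - (M : ℝ) * a := by linarith
    have k2 : t * (2 * t - (M : ℝ) * a) ≤ ((M : ℝ) + 1) * a * (2 * t - (M : ℝ) * a) :=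
      mul_le_mul_of_nonneg_right hM2.le k1
    have key : t ^ 2 ≤ ((M : ℝ) + 1) * a * (2 * t - (M : ℝ) * a) := by
      nlinarith [mul_nonneg ht (sub_nonneg.2 hM1)]
    nlinarith [mul_le_mul_of_nonneg_right key hb.le]
  · refine le_trans hhigh ?_
    rw [div_add' _ _ _ hb.ne', div_le_div_iff₀ hb (by positivity)]
    have hMa : (0:ℝ) ≤ (M:ℝ) * a := mul_nonneg (Nat.cast_nonneg _) ha.le
    have r1 : ((M : ℝ) + 1) * a ≤ t + a := by linarith
    have r2 : 2 * t - (M : ℝ) * a + 2 * b ≤ t + a + 2 * b := by linarith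
    have key : ((M : ℝ) + 1) * a * (2 * t - (M : ℝ) * a + 2 * b) ≤ (t + a) * (t + a + 2 * b) :=
      mul_le_mul r1 r2 (by linarith) (by linarith)
    nlinarith [mul_le_mul_of_nonneg_right key hb.le, mul_nonneg (mul_nonneg hb.le hb.le) hb.le]
lemma aux_fin (a b : ℝ) (ha : 0 < a) (hb : 0 < b) (t : ℝ) :
    {p : ℕ × ℕ | (p.1 : ℝ) * a + (p.2 : ℝ) * b ≤ t}.Finite := by
  apply Set.Finite.subset ((Set.finite_Iic (⌊t / a⌋₊)).prod (Set.finite_Iic (⌊t / b⌋₊)))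
  rintro ⟨m, n⟩ h
  simp only [Set.mem_setOf_eq] at h
  constructor
  · refine Set.mem_Iic.2 (Nat.le_floor ?_)
    rw [le_div_iff₀ ha]
    nlinarith [mul_nonneg (Nat.cast_nonneg (α := ℝ) n) hb.le]
  · refine Set.mem_Iic.2 (Nat.le_floor ?_)
    rw [le_div_iff₀ hb]
    nlinarith [mul_nonneg (Nat.cast_nonneg (α := ℝ) m) ha.le]

theorem stmt_17 (a b : ℝ) (ha : 0 < a) (hb : 0 < b) :
    let N : ℕ → ℝ := fun k =>
      sInf {t : ℝ | k + 1 ≤ Nat.card {p : ℕ × ℕ | (p.1 : ℝ) * a + (p.2 : ℝ) * b ≤ t}}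
    Filter.Tendsto (fun k : ℕ => (N k) ^ 2 / k) Filter.atTop (nhds (2 * a * b)) := by
  intro N
  set c : ℝ := 2 * a * b with hcdef
  have hc : 0 < c := by positivity
  set d : ℝ := a + b with hddef
  have hd : 0 < d := by positivity
  set u : ℕ → ℝ := fun k => Real.sqrt (c * (k + 1)) with hu
  have hu0 : ∀ k : ℕ, 0 ≤ u k := fun k => Real.sqrt_nonneg _
  have husq : ∀ k : ℕ, (u k) ^ 2 = c * (k + 1) := fun k =>
    Real.sq_sqrt (by positivity)
  -- membership of u k
  have h_mem : ∀ k : ℕ, u k ∈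
      {t : ℝ | k + 1 ≤ Nat.card {p : ℕ × ℕ | (p.1 : ℝ) * a + (p.2 : ℝ) * b ≤ t}} := by
    intro k
    have h1 := (aux_card a b (u k) ha hb (hu0 k)).1
    rw [husq k] at h1
    have h2 : c * (k + 1) / c = (k : ℝ) + 1 := by field_simp
    rw [h2] at h1
    simp only [Set.mem_setOf_eq]
    exact_mod_cast h1
  -- lower bound for the set
  have h_lb : ∀ k : ℕ, ∀ t ∈
      {t : ℝ | k + 1 ≤ Nat.card {p : ℕ × ℕ | (p.1 : ℝ) * a + (p.2 : ℝ) * b ≤ t}},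
      u k - d ≤ t := by
    intro k t hts
    simp only [Set.mem_setOf_eq] at hts
    by_contra hcon
    push_neg at hcon
    rcases lt_or_ge t 0 with ht0 | ht0
    · have hemp : {p : ℕ × ℕ | (p.1 : ℝ) * a + (p.2 : ℝ) * b ≤ t} = ∅ := by
        ext p
        simp only [Set.mem_setOf_eq, Set.mem_empty_iff_false, iff_false, not_le]
        nlinarith [mul_nonneg (Nat.cast_nonneg (α := ℝ) p.1) ha.le,
          mul_nonneg (Nat.cast_nonneg (α := ℝ) p.2) hb.le]
      rw [hemp] at hts
      simp at hts
    · have h2 := (aux_card a b t ha hb ht0).2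
      have h3 : t + a + b < u k := by rw [hddef] at hcon; linarith
      have h4 : (t + a + b) ^ 2 < c * (k + 1) := by
        rw [← husq k]
        exact pow_lt_pow_left₀ h3 (by linarith) (by norm_num)
      have h5 : (Nat.card {p : ℕ × ℕ | (p.1 : ℝ) * a + (p.2 : ℝ) * b ≤ t} : ℝ) < (k : ℝ) + 1 := by
        refine lt_of_le_of_lt h2 ?_
        rw [div_lt_iff₀ hc]
        nlinarith
      have h6 : ((k : ℝ) + 1) ≤ (Nat.card {p : ℕ × ℕ | (p.1 : ℝ) * a + (p.2 : ℝ) * b ≤ t} : ℝ) := by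
        exact_mod_cast hts
      linarith
  have h_bdd : ∀ k : ℕ, BddBelow
      {t : ℝ | k + 1 ≤ Nat.card {p : ℕ × ℕ | (p.1 : ℝ) * a + (p.2 : ℝ) * b ≤ t}} :=
    fun k => ⟨u k - d, h_lb k⟩
  have hNle : ∀ k : ℕ, N k ≤ u k := fun k => csInf_le (h_bdd k) (h_mem k)
  have hNge : ∀ k : ℕ, u k - d ≤ N k := fun k => le_csInf ⟨u k, h_mem k⟩ (h_lb k)
  -- limits
  have hA : Filter.Tendsto (fun k : ℕ => c * (k + 1) / k) Filter.atTop (nhds c) := by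
    have : ∀ᶠ k : ℕ in Filter.atTop, c + c / k = c * (k + 1) / k := by
      filter_upwards [Filter.eventually_ge_atTop 1] with k hk
      have : (k : ℝ) ≠ 0 := by positivity
      field_simp
    refine Filter.Tendsto.congr' this ?_
    have := tendsto_const_div_atTop_nhds_zero_nat c
    simpa using (tendsto_const_nhds (x := c)).add this
  have hB : Filter.Tendsto (fun k : ℕ => u k / k) Filter.atTop (nhds 0) := by
    have hub : ∀ᶠ k : ℕ in Filter.atTop, u k / k ≤ Real.sqrt (2 * c) / Real.sqrt k := by
      filter_upwards [Filter.eventually_ge_atTop 1] with k hk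
      have hk1 : (1 : ℝ) ≤ (k : ℝ) := by exact_mod_cast hk
      have hkpos : (0 : ℝ) < k := by linarith
      have h1 : u k ≤ Real.sqrt (2 * c) * Real.sqrt k := by
        rw [← Real.sqrt_mul (by positivity)]
        exact Real.sqrt_le_sqrt (by nlinarith)
      rw [div_le_div_iff₀ hkpos (Real.sqrt_pos.2 hkpos)]
      calc u k * Real.sqrt k ≤ (Real.sqrt (2 * c) * Real.sqrt k) * Real.sqrt k :=
            mul_le_mul_of_nonneg_right h1 (Real.sqrt_nonneg _)
        _ = Real.sqrt (2 * c) * k := by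
            rw [mul_assoc, Real.mul_self_sqrt hkpos.le]
    have hlb' : ∀ᶠ k : ℕ in Filter.atTop, (0 : ℝ) ≤ u k / k := by
      filter_upwards with k
      positivity
    have hz : Filter.Tendsto (fun k : ℕ => Real.sqrt (2 * c) / Real.sqrt k)
        Filter.atTop (nhds 0) := by
      have h1 := (Real.continuous_sqrt.tendsto 0).comp (tendsto_const_div_atTop_nhds_zero_nat (2 * c))
      rw [Real.sqrt_zero] at h1
      refine h1.congr fun k => ?_
      show Real.sqrt (2 * c / k) = _
      rw [Real.sqrt_div (by positivity)]
    exact tendsto_of_tendsto_of_tendsto_of_le_of_le' tendsto_const_nhds hz hlb' hub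
  have hD : Filter.Tendsto (fun k : ℕ => d ^ 2 / k) Filter.atTop (nhds 0) :=
    tendsto_const_div_atTop_nhds_zero_nat _
  have hg : Filter.Tendsto
      (fun k : ℕ => c * (k + 1) / k - 2 * d * (u k / k) + d ^ 2 / k)
      Filter.atTop (nhds c) := by
    have := (hA.sub ((hB.const_mul (2 * d)))).add hD
    simpa using this
  -- eventual bounds
  have hev : ∀ᶠ k : ℕ in Filter.atTop, d ≤ u k := by
    have htop : Filter.Tendsto (fun k : ℕ => c * ((k : ℝ) + 1)) Filter.atTop Filter.atTop := by
      apply Filter.Tendsto.const_mul_atTop hc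
      exact Filter.tendsto_atTop_add_const_right _ _ tendsto_natCast_atTop_atTop
    filter_upwards [htop.eventually_ge_atTop (d ^ 2)] with k hk
    calc d = Real.sqrt (d ^ 2) := by rw [Real.sqrt_sq hd.le]
      _ ≤ u k := Real.sqrt_le_sqrt hk
  have hlow : ∀ᶠ k : ℕ in Filter.atTop,
      c * (k + 1) / k - 2 * d * (u k / k) + d ^ 2 / k ≤ (N k) ^ 2 / k := by
    filter_upwards [hev] with k hk
    have h1 : 0 ≤ u k - d := by linarith
    have h2 : (u k - d) ^ 2 ≤ (N k) ^ 2 := by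
      have := hNge k
      nlinarith
    have h3 : (u k - d) ^ 2 / k ≤ (N k) ^ 2 / k :=
      div_le_div_of_nonneg_right h2 (Nat.cast_nonneg k)
    refine le_trans (le_of_eq ?_) h3
    rw [sub_sq, husq k]
    ring
  have hhigh : ∀ᶠ k : ℕ in Filter.atTop, (N k) ^ 2 / k ≤ c * (k + 1) / k := by
    filter_upwards [hev] with k hk
    have h1 : 0 ≤ N k := le_trans (by linarith [hNge k]) (le_refl _)
    have h2 : (N k) ^ 2 ≤ c * (k + 1) := by
      rw [← husq k]
      exact pow_le_pow_left₀ h1 (hNle k) 2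
    exact div_le_div_of_nonneg_right h2 (Nat.cast_nonneg k)
  exact tendsto_of_tendsto_of_tendsto_of_le_of_le' hg hA hlow hhigh
end
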